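/- Dynamic-programming optimality of the branching policy: let p : Π_{t} {0,1}^t → ℝ≥0 assign a score to every binary sequence, and suppose that for every sequence δ of length t with δ[t_0] = 1 (for some t_0 ≤ t), writing δ = (δ_1, 1, δ_2), we have p(δ) ≤ p((δ̂, 1, δ_2)) where δ̂ is a fixed maximizer of p over sequences of length t_0 − 1. Define the filter bank F_t recursively: F_0 = {(0), (1)}, and F_{t+1} is obtained from F_t by appending 0 to every member, and additionally appending 1 to (a copy of) every member f of F_t with p(f) = max_{f' ∈ F_t} p(f'). Then for every t, F_t contains a maximizer of p over all binary sequences of length t+1. -/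

import Mathlib

/-!
Say that `f` dominates `g` when `p (g ++ s) ≤ p (f ++ s)` for every continuation `s`.
By strong induction on `t`, some `f ∈ F_t` dominates the maximizer `δ̂_{t+1}`. Unless
`δ̂_{t+1} = 0ᵗ⁺¹ ∈ F_t`, write `δ̂_{t+1} = a ++ [1] ++ 0ᵏ`. If `a = []`, then `δ̂_{t+1}`
itself lies in `F_t`. Otherwise the partial-MAP property makes `δ̂_{|a|} ++ [1]` dominate
`a ++ [1]`, and by induction some `f' ∈ F_{|a|-1}` dominates `δ̂_{|a|}`; such an `f'` has
maximal score in its bank, so `f' ++ [1] ++ 0ᵏ ∈ F_t` is the required dominator.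
A dominator of `δ̂_{t+1}` is a maximizer.
-/

open scoped NNReal Classical

/-- The filter bank of the OEDFB algorithm with `p_thres = 0`:
`F₀ = {(0),(1)}`; `F_{t+1}` is obtained from `F_t` by appending `0` to every
member and appending `1` to every member attaining the maximal score. -/
noncomputable def filterBank (p : List Bool → ℝ≥0) : ℕ → Finset (List Bool)
  | 0 => {[false], [true]}
  | t + 1 =>
      (filterBank p t).image (fun f => f ++ [false]) ∪
      ((filterBank p t).filter
        (fun f => ∀ f' ∈ filterBank p t, p f' ≤ p f)).image (fun f => f ++ [true])

def Dominates {α β : Type*} [LE β] (p : List α → β) (f g : List α) : Prop :=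
  ∀ s, p (g ++ s) ≤ p (f ++ s)

namespace Dominates

variable {α β : Type*} {p : List α → β} {f g h : List α}

theorem le [LE β] (hfg : Dominates p f g) : p g ≤ p f := by
  simpa using hfg []

theorem refl [Preorder β] (f : List α) : Dominates p f f :=
  fun _ => le_rfl

theorem trans [Preorder β] (hfg : Dominates p f g) (hgh : Dominates p g h) :
    Dominates p f h :=
  fun s => (hgh s).trans (hfg s)

theorem append_right [LE β] (hfg : Dominates p f g) (u : List α) :
    Dominates p (f ++ u) (g ++ u) := by
  intro s
  simpa only [List.append_assoc] using hfg (u ++ s)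

end Dominates

theorem List.eq_replicate_false_or_eq_append_true_replicate_false (l : List Bool) :
    (∃ k, l = List.replicate k false) ∨
      ∃ a k, l = a ++ [true] ++ List.replicate k false := by
  induction l using List.reverseRecOn with
  | nil => exact Or.inl ⟨0, rfl⟩
  | append_singleton l b ih =>
    cases b with
    | true => exact Or.inr ⟨l, 0, by simp⟩
    | false =>
      rcases ih with ⟨k, rfl⟩ | ⟨a, k, rfl⟩
      · exact Or.inl ⟨k + 1, by rw [List.replicate_succ']⟩
      · exact Or.inr ⟨a, k + 1, by rw [List.replicate_succ', List.append_assoc]⟩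

section FilterBank

variable {p : List Bool → ℝ≥0}

theorem length_of_mem_filterBank {t : ℕ} {f : List Bool} (hf : f ∈ filterBank p t) :
    f.length = t + 1 := by
  induction t generalizing f with
  | zero =>
    simp only [filterBank, Finset.mem_insert, Finset.mem_singleton] at hf
    rcases hf with rfl | rfl <;> rfl
  | succ t ih =>
    simp only [filterBank, Finset.mem_union, Finset.mem_image, Finset.mem_filter] at hf
    rcases hf with ⟨g, hg, rfl⟩ | ⟨g, ⟨hg, -⟩, rfl⟩ <;> simp [ih hg]

theorem append_false_mem_filterBank {t : ℕ} {f : List Bool} (hf : f ∈ filterBank p t) :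
    f ++ [false] ∈ filterBank p (t + 1) := by
  simp only [filterBank, Finset.mem_union, Finset.mem_image]
  exact Or.inl ⟨f, hf, rfl⟩

theorem append_true_mem_filterBank {t : ℕ} {f : List Bool} (hf : f ∈ filterBank p t)
    (hmax : ∀ f' ∈ filterBank p t, p f' ≤ p f) :
    f ++ [true] ∈ filterBank p (t + 1) := by
  simp only [filterBank, Finset.mem_union, Finset.mem_image, Finset.mem_filter]
  exact Or.inr ⟨f, ⟨hf, hmax⟩, rfl⟩

theorem append_replicate_false_mem_filterBank {t : ℕ} {f : List Bool}
    (hf : f ∈ filterBank p t) (k : ℕ) :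
    f ++ List.replicate k false ∈ filterBank p (t + k) := by
  induction k with
  | zero => simpa using hf
  | succ k ih =>
    rw [List.replicate_succ', ← List.append_assoc]
    exact append_false_mem_filterBank ih

theorem replicate_false_mem_filterBank (t : ℕ) :
    List.replicate (t + 1) false ∈ filterBank p t := by
  simpa [List.replicate_succ] using
    append_replicate_false_mem_filterBank (p := p) (t := 0) (f := [false])
      (by simp [filterBank]) t

theorem true_cons_replicate_false_mem_filterBank (t : ℕ) :
    true :: List.replicate t false ∈ filterBank p t := by
  simpa using
    append_replicate_false_mem_filterBank (p := p) (t := 0) (f := [true])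
      (by simp [filterBank]) t

variable (δhat : ℕ → List Bool) (hlen : ∀ n, (δhat n).length = n)
  (hhatmax : ∀ n, ∀ δ : List Bool, δ.length = n → p δ ≤ p (δhat n))
  (hpartialMAP : ∀ δ₁ δ₂ : List Bool,
    p (δ₁ ++ [true] ++ δ₂) ≤ p (δhat δ₁.length ++ [true] ++ δ₂))
include hlen hhatmax hpartialMAP

theorem exists_mem_filterBank_dominates (t : ℕ) :
    ∃ f ∈ filterBank p t, Dominates p f (δhat (t + 1)) := by
  induction t using Nat.strong_induction_on with
  | _ t ih =>
  have hδ := hlen (t + 1)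
  rcases (δhat (t + 1)).eq_replicate_false_or_eq_append_true_replicate_false with
    ⟨k, hk⟩ | ⟨a, k, hk⟩
  · obtain rfl : k = t + 1 := by simp [hk] at hδ; omega
    exact ⟨_, replicate_false_mem_filterBank t, hk ▸ Dominates.refl _⟩
  rw [hk] at hδ ⊢
  simp only [List.length_append, List.length_singleton, List.length_replicate] at hδ
  rcases a with _ | ⟨b, a⟩
  · obtain rfl : k = t := by simp at hδ; omega
    exact ⟨_, true_cons_replicate_false_mem_filterBank k, Dominates.refl _⟩
  simp only [List.length_cons] at hδ
  obtain ⟨f, hf, hdom⟩ := ih a.length (by omega)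
  have hfmax : ∀ g ∈ filterBank p a.length, p g ≤ p f := fun g hg =>
    (hhatmax _ g (length_of_mem_filterBank hg)).trans hdom.le
  have hmem := append_replicate_false_mem_filterBank
    (append_true_mem_filterBank hf hfmax) k
  obtain rfl : t = a.length + 1 + k := by omega
  have hMAP : Dominates p (δhat (a.length + 1) ++ [true]) (b :: a ++ [true]) :=
    hpartialMAP (b :: a)
  exact ⟨_, hmem, ((hdom.append_right _).trans hMAP).append_right _⟩

end FilterBank

/-- Optimality of the branching policy (Theorem 2): if the score `p` satisfies
the partial-MAP property (replacing the prefix before a change by a prefix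
maximizer does not decrease the score), then for every `t` the filter bank
`F_t` contains a maximizer of `p` over all binary sequences of length `t+1`. -/
theorem optimality_of_branching_policy
    (p : List Bool → ℝ≥0)
    (δhat : ℕ → List Bool) (hlen : ∀ n, (δhat n).length = n)
    (hhatmax : ∀ n, ∀ δ : List Bool, δ.length = n → p δ ≤ p (δhat n))
    (hpartialMAP : ∀ δ₁ δ₂ : List Bool,
      p (δ₁ ++ [true] ++ δ₂) ≤ p (δhat δ₁.length ++ [true] ++ δ₂)) :
    ∀ t : ℕ, ∃ f ∈ filterBank p t,
      ∀ δ : List Bool, δ.length = t + 1 → p δ ≤ p f := by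
  intro t
  obtain ⟨f, hf, hdom⟩ := exists_mem_filterBank_dominates δhat hlen hhatmax hpartialMAP t
  exact ⟨f, hf, fun δ hδ => (hhatmax _ δ hδ).trans hdom.le⟩
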